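/- For each KPP reaction function f, as u_c → 1⁻ the propagation speed satisfies v*(u_c) ~ |f'(1)|^{1/2} (1 − u_c); that is, the quotient v*(u_c) / ((1 − u_c) |f'(1)|^{1/2}) tends to 1 as u_c → 1⁻. -/

import Mathlib

open Real Filter Topology

/-- A KPP reaction function: `f ∈ C¹`, `f 0 = f 1 = 0`, `f' 0 = 1`, `f' 1 < 0`,
`0 < f u ≤ u` on `(0,1)` and `f u < 0` for `u > 1`. -/
def IsKPP (f : ℝ → ℝ) : Prop :=
  ContDiff ℝ 1 f ∧ f 0 = 0 ∧ f 1 = 0 ∧ deriv f 0 = 1 ∧ deriv f 1 < 0 ∧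
  (∀ u : ℝ, 0 < u → u < 1 → 0 < f u ∧ f u ≤ u) ∧
  (∀ u : ℝ, 1 < u → f u < 0)

/-- The cut-off reaction function: `f_c u = f u` for `u > u_c`, and `0` for `u ≤ u_c`. -/
noncomputable def cutoff (f : ℝ → ℝ) (uc : ℝ) : ℝ → ℝ :=
  fun u => if uc < u then f u else 0

/-- A permanent form travelling wave solution with cut-off `uc` and speed `v`. -/
def IsPTW (f : ℝ → ℝ) (uc v : ℝ) (U : ℝ → ℝ) : Prop :=
  ContDiff ℝ 1 U ∧
  (∀ y : ℝ, y ≠ 0 → ContDiffAt ℝ 2 U y) ∧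
  (∀ y : ℝ, y ≠ 0 → deriv (deriv U) y + v * deriv U y + cutoff f uc (U y) = 0) ∧
  U 0 = uc ∧
  (∀ y : ℝ, y < 0 → uc ≤ U y ∧ U y ≤ 1) ∧
  (∀ y : ℝ, 0 < y → 0 ≤ U y ∧ U y ≤ uc) ∧
  Tendsto U atBot (𝓝 1) ∧
  Tendsto U atTop (𝓝 0)

/-!
Suppose `γ² (1 - u) ≤ f u ≤ G² (1 - u)` on `[uc, 1]`. Right of the cut-off point the equation is
`U'' + v U' = 0`, so `U'(0) = -v uc`. Left of it, the energy `U'² / 2 + ∫_{uc}^{U} f` has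
derivative `-v U'²`, and along a sequence `y → -∞` with `U'(y) → 0` it tends to
`∫_{uc}^{1} f ≤ G² (1 - uc)² / 2`; comparing with its value `(v uc)² / 2` at `0` gives
`v uc ≤ G (1 - uc)`. Comparing `1 - U` with the decaying mode `e^{γ y}` gives `γ (1 - uc) ≤ v`.
Since `f u = |f'(1)| (1 - u) + o(1 - u)`, both `γ` and `G` can be taken arbitrarily close to
`|f'(1)|^{1/2}` once `uc` is close to `1`.
-/

open Set

lemma exists_tendsto_deriv_comp_zero {U : ℝ → ℝ} {l : Filter ℝ} {a : ℝ}
    (hU : Differentiable ℝ U) (hUl : Tendsto U l (𝓝 a)) (hl : Tendsto (· + 1) l l) :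
    ∃ ξ : ℝ → ℝ, (∀ y, ξ y ∈ Ioo y (y + 1)) ∧ Tendsto (deriv U ∘ ξ) l (𝓝 0) := by
  choose ξ hξ hslope using fun y : ℝ =>
    exists_deriv_eq_slope U (lt_add_one y) hU.continuous.continuousOn hU.differentiableOn
  refine ⟨ξ, hξ, ?_⟩
  have hdiff : Tendsto (fun y => U (y + 1) - U y) l (𝓝 (a - a)) := (hUl.comp hl).sub hUl
  rw [sub_self] at hdiff
  refine hdiff.congr fun y => ?_
  rw [Function.comp_apply, hslope, add_sub_cancel_left, div_one]

lemma exists_tendsto_atTop_deriv_comp_zero {U : ℝ → ℝ} {a : ℝ} (hU : Differentiable ℝ U)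
    (hUa : Tendsto U atTop (𝓝 a)) :
    ∃ ξ : ℝ → ℝ, Tendsto ξ atTop atTop ∧ Tendsto (deriv U ∘ ξ) atTop (𝓝 0) := by
  obtain ⟨ξ, hξ, hlim⟩ :=
    exists_tendsto_deriv_comp_zero hU hUa (tendsto_atTop_add_const_right _ 1 tendsto_id)
  exact ⟨ξ, tendsto_atTop_mono (fun y => (hξ y).1.le) tendsto_id, hlim⟩

lemma exists_tendsto_atBot_deriv_comp_zero {U : ℝ → ℝ} {a : ℝ} (hU : Differentiable ℝ U)
    (hUa : Tendsto U atBot (𝓝 a)) :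
    ∃ ξ : ℝ → ℝ, Tendsto ξ atBot atBot ∧ Tendsto (deriv U ∘ ξ) atBot (𝓝 0) := by
  have hshift : Tendsto (fun y : ℝ => y + 1) atBot atBot :=
    tendsto_atBot_add_const_right _ 1 tendsto_id
  obtain ⟨ξ, hξ, hlim⟩ := exists_tendsto_deriv_comp_zero hU hUa hshift
  exact ⟨ξ, tendsto_atBot_mono (fun y => (hξ y).2.le) hshift, hlim⟩

lemma eq_of_hasDerivAt_zero_on_Ioi {φ : ℝ → ℝ} {a y : ℝ} (hφ : ContinuousOn φ (Ici a))
    (hφ' : ∀ x, a < x → HasDerivAt φ 0 x) (hy : a ≤ y) : φ y = φ a := by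
  have hdiff : DifferentiableOn ℝ φ (interior (Ici a)) := by
    rw [interior_Ici]
    exact fun x hx => (hφ' x hx).differentiableAt.differentiableWithinAt
  have hzero : ∀ x ∈ interior (Ici a), deriv φ x = 0 := by
    rw [interior_Ici]
    exact fun x hx => (hφ' x hx).deriv
  exact le_antisymm
    (antitoneOn_of_deriv_nonpos (convex_Ici a) hφ hdiff (fun x hx => (hzero x hx).le)
      self_mem_Ici hy hy)
    (monotoneOn_of_deriv_nonneg (convex_Ici a) hφ hdiff (fun x hx => (hzero x hx).ge)
      self_mem_Ici hy hy)

lemma eventually_forall_Icc_mul_one_sub_le {f : ℝ → ℝ} {μ ε : ℝ} (hf : HasDerivAt f (-μ) 1)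
    (hf1 : f 1 = 0) (hε : 0 < ε) :
    ∀ᶠ uc in 𝓝[<] (1:ℝ), ∀ u ∈ Icc uc 1,
      (μ - ε) * (1 - u) ≤ f u ∧ f u ≤ (μ + ε) * (1 - u) := by
  obtain ⟨δ, hδ, hball⟩ := Metric.eventually_nhds_iff.1 ((hasDerivAt_iff_isLittleO.1 hf).def hε)
  filter_upwards [Ioo_mem_nhdsLT (sub_lt_self 1 hδ)] with uc huc u hu
  have hdist : dist u 1 < δ := by
    rw [Real.dist_eq, abs_sub_comm, abs_of_nonneg (sub_nonneg.2 hu.2)]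
    linarith [huc.1, hu.1]
  have hlin := hball hdist
  rw [hf1, Real.norm_eq_abs, Real.norm_eq_abs, smul_eq_mul, abs_sub_comm u,
    abs_of_nonneg (sub_nonneg.2 hu.2)] at hlin
  constructor <;> linarith [abs_le.1 hlin]

noncomputable def waveEnergy (f : ℝ → ℝ) (uc : ℝ) (U : ℝ → ℝ) (y : ℝ) : ℝ :=
  deriv U y ^ 2 / 2 + ∫ t in uc..U y, f t

namespace IsPTW

variable {f : ℝ → ℝ} {uc v : ℝ} {U : ℝ → ℝ}

lemma differentiable (hU : IsPTW f uc v U) : Differentiable ℝ U :=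
  hU.1.differentiable one_ne_zero

lemma continuous_deriv (hU : IsPTW f uc v U) : Continuous (deriv U) :=
  hU.1.continuous_deriv_one

lemma hasDerivAt_deriv (hU : IsPTW f uc v U) {y : ℝ} (hy : y ≠ 0) :
    HasDerivAt (deriv U) (-(v * deriv U y) - cutoff f uc (U y)) y := by
  have ⟨_, hC2, hode, _⟩ := hU
  have hdiff : DifferentiableAt ℝ (deriv U) y :=
    ((hC2 y hy).derivWithin (m := 1) (by norm_num)).differentiableAt one_ne_zero
  exact hdiff.hasDerivAt.congr_deriv (by linarith [hode y hy])

lemma deriv_eq_neg_mul (hU : IsPTW f uc v U) {y : ℝ} (hy : 0 ≤ y) :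
    deriv U y = -(v * U y) := by
  have ⟨_, _, _, _, _, hright, _, htop⟩ := hU
  set k := deriv U 0 + v * U 0
  have hconst : ∀ x, 0 ≤ x → deriv U x + v * U x = k := fun x hx =>
    eq_of_hasDerivAt_zero_on_Ioi
      (hU.continuous_deriv.add (continuous_const.mul hU.differentiable.continuous)).continuousOn
      (fun z hz => ((hU.hasDerivAt_deriv hz.ne').add
        ((hU.differentiable z).hasDerivAt.const_mul v)).congr_deriv
          (by simp [cutoff, not_lt.2 (hright z hz).2])) hx
  have hk : Tendsto (deriv U) atTop (𝓝 (k - v * 0)) := by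
    refine (tendsto_const_nhds.sub (htop.const_mul v)).congr' ?_
    filter_upwards [eventually_ge_atTop 0] with x hx
    linarith [hconst x hx]
  obtain ⟨ξ, hξ, hU'ξ⟩ := exists_tendsto_atTop_deriv_comp_zero hU.differentiable htop
  have hk0 : k - v * 0 = 0 := tendsto_nhds_unique (hk.comp hξ) hU'ξ
  linarith [hconst y hy]

lemma speed_ne_zero (hU : IsPTW f uc v U) (huc : uc ≠ 0) : v ≠ 0 := by
  rintro rfl
  have ⟨_, _, _, hU0, _, _, _, htop⟩ := hU
  have hconst : ∀ y, 0 ≤ y → U y = uc := fun y hy =>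
    hU0 ▸ eq_of_hasDerivAt_zero_on_Ioi hU.differentiable.continuous.continuousOn
      (fun x hx => (hU.differentiable x).hasDerivAt.congr_deriv
        (by simp [hU.deriv_eq_neg_mul hx.le])) hy
  have hlim : Tendsto U atTop (𝓝 uc) :=
    tendsto_const_nhds.congr' ((eventually_ge_atTop 0).mono fun y hy => (hconst y hy).symm)
  exact huc (tendsto_nhds_unique hlim htop)

lemma deriv_eq_zero_of_eq (hU : IsPTW f uc v U) {y : ℝ} (hy : y < 0) (hUy : U y = uc) :
    deriv U y = 0 := by
  have ⟨_, _, _, _, hleft, _⟩ := hU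
  refine IsLocalMin.deriv_eq_zero ?_
  filter_upwards [Iio_mem_nhds hy] with z hz
  exact hUy ▸ (hleft z hz).1

lemma hasDerivAt_waveEnergy (hU : IsPTW f uc v U) (hf : Continuous f) {y : ℝ} (hy : y < 0) :
    HasDerivAt (waveEnergy f uc U) (-(v * deriv U y ^ 2)) y := by
  have ⟨_, _, _, _, hleft, _⟩ := hU
  have hF := (hf.integral_hasStrictDerivAt uc (U y)).hasDerivAt.comp y
    (hU.differentiable y).hasDerivAt
  refine (((hU.hasDerivAt_deriv hy.ne).pow 2).div_const 2 |>.add hF).congr_deriv ?_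
  have hcut : deriv U y * (f (U y) - cutoff f uc (U y)) = 0 := by
    rcases (hleft y hy).1.eq_or_lt with h | h
    · rw [hU.deriv_eq_zero_of_eq hy h.symm, zero_mul]
    · simp [cutoff, h]
  simp only [Nat.cast_ofNat]
  linear_combination hcut

lemma antitoneOn_waveEnergy (hU : IsPTW f uc v U) (hf : Continuous f) (hv : 0 ≤ v) :
    AntitoneOn (waveEnergy f uc U) (Iic 0) := by
  have hcont : Continuous (waveEnergy f uc U) :=
    ((hU.continuous_deriv.pow 2).div_const 2).add
      ((intervalIntegral.continuous_primitive (fun a b => hf.intervalIntegrable a b) uc).comp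
        hU.differentiable.continuous)
  refine antitoneOn_of_deriv_nonpos (convex_Iic 0) hcont.continuousOn ?_ ?_ <;>
    rw [interior_Iic]
  · exact fun y hy => (hU.hasDerivAt_waveEnergy hf hy).differentiableAt.differentiableWithinAt
  · intro y hy
    rw [(hU.hasDerivAt_waveEnergy hf hy).deriv, neg_nonpos]
    positivity

lemma waveEnergy_zero (hU : IsPTW f uc v U) : waveEnergy f uc U 0 = (v * uc) ^ 2 / 2 := by
  have ⟨_, _, _, hU0, _⟩ := hU
  simp [waveEnergy, hU.deriv_eq_neg_mul le_rfl, hU0]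

lemma waveEnergy_le (hU : IsPTW f uc v U) (hf : Continuous f) (hv : 0 ≤ v) {y : ℝ} (hy : y ≤ 0) :
    waveEnergy f uc U y ≤ ∫ t in uc..1, f t := by
  have ⟨_, _, _, _, _, _, hbot, _⟩ := hU
  obtain ⟨ξ, hξ, hU'ξ⟩ := exists_tendsto_atBot_deriv_comp_zero hU.differentiable hbot
  have hlim : Tendsto (waveEnergy f uc U ∘ ξ) atBot (𝓝 (0 ^ 2 / 2 + ∫ t in uc..1, f t)) :=
    ((hU'ξ.pow 2).div_const 2).add
      (((intervalIntegral.continuous_primitive (fun a b => hf.intervalIntegrable a b) uc).tendsto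
        1).comp (hbot.comp hξ))
  rw [zero_pow two_ne_zero, zero_div, zero_add] at hlim
  refine ge_of_tendsto hlim ?_
  filter_upwards [hξ.eventually_le_atBot y] with t ht
  exact hU.antitoneOn_waveEnergy hf hv (ht.trans hy) hy ht

lemma lt_of_neg (hU : IsPTW f uc v U) (hf : Continuous f) (hv : 0 ≤ v) (huc : 0 < uc) {y : ℝ}
    (hy : y < 0) : uc < U y := by
  have ⟨_, _, _, _, hleft, _⟩ := hU
  refine (hleft y hy).1.lt_of_ne fun hUy => ?_
  have hEy : waveEnergy f uc U y = 0 := by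
    simp [waveEnergy, hU.deriv_eq_zero_of_eq hy hUy.symm, ← hUy]
  have hv0 : 0 < v := hv.lt_of_ne (hU.speed_ne_zero huc.ne').symm
  have hE := hU.antitoneOn_waveEnergy hf hv hy.le self_mem_Iic hy.le
  rw [hEy, hU.waveEnergy_zero] at hE
  nlinarith [mul_pos hv0 huc]

lemma speed_mul_le (hU : IsPTW f uc v U) (hf : Continuous f) (hv : 0 ≤ v) (huc : uc ≤ 1)
    {G : ℝ} (hG : 0 ≤ G) (hfG : ∀ u ∈ Icc uc 1, f u ≤ G ^ 2 * (1 - u)) :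
    v * uc ≤ G * (1 - uc) := by
  have hF : ∫ t in uc..1, f t ≤ G ^ 2 * (1 - uc) ^ 2 / 2 := calc
    ∫ t in uc..1, f t ≤ ∫ t in uc..1, G ^ 2 * (1 - t) :=
      intervalIntegral.integral_mono_on huc (hf.intervalIntegrable _ _)
        ((by fun_prop : Continuous fun t : ℝ => G ^ 2 * (1 - t)).intervalIntegrable _ _) hfG
    _ = G ^ 2 * (1 - uc) ^ 2 / 2 := by
      rw [intervalIntegral.integral_const_mul, intervalIntegral.integral_comp_sub_left (fun x => x),
        integral_id]
      ring
  have hE := hU.waveEnergy_zero ▸ hU.waveEnergy_le hf hv le_rfl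
  have hsq : (v * uc) ^ 2 ≤ (G * (1 - uc)) ^ 2 := by rw [mul_pow]; linarith
  exact (le_abs_self _).trans (abs_le_of_sq_le_sq hsq (mul_nonneg hG (sub_nonneg.2 huc)))

lemma mul_le_speed (hU : IsPTW f uc v U) (hf : Continuous f) (hv : 0 ≤ v) (huc : 0 < uc)
    {γ : ℝ} (hγ : 0 < γ) (hfγ : ∀ u ∈ Icc uc 1, γ ^ 2 * (1 - u) ≤ f u) :
    γ * (1 - uc) ≤ v := by
  have ⟨_, _, _, hU0, hleft, _, hbot, _⟩ := hU
  -- With `w = 1 - U`, `g = e^{γ y} (w' - (γ - v) w)`: the factor `γ - v` makes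
  -- `g 0 = v - γ (1 - uc)`, and `g' ≥ 0` because `f U ≥ γ² w ≥ γ (γ - v) w`.
  set g : ℝ → ℝ := fun y => exp (γ * y) * (-deriv U y - (γ - v) * (1 - U y))
  have hg' : ∀ y < 0, HasDerivAt g (exp (γ * y) * (f (U y) - γ * (γ - v) * (1 - U y))) y := by
    intro y hy
    have hexp := ((hasDerivAt_id' y).const_mul γ).exp
    have hU' := (hU.differentiable y).hasDerivAt
    refine (hexp.mul ((hU.hasDerivAt_deriv hy.ne).neg.sub
      ((hU'.const_sub 1).const_mul (γ - v)))).congr_deriv ?_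
    simp only [cutoff, hU.lt_of_neg hf hv huc hy, if_true, Pi.sub_apply, Pi.neg_apply]
    ring
  have hmono : MonotoneOn g (Iic 0) := by
    have hcont : Continuous g := by
      have := hU.continuous_deriv; have := hU.differentiable.continuous; fun_prop
    refine monotoneOn_of_deriv_nonneg (convex_Iic 0) hcont.continuousOn ?_ ?_ <;>
      rw [interior_Iic]
    · exact fun y hy => (hg' y hy).differentiableAt.differentiableWithinAt
    · intro y hy
      obtain ⟨hUuc, hU1⟩ := hleft y hy
      rw [(hg' y hy).deriv]
      have hfU := hfγ (U y) ⟨hUuc, hU1⟩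
      have hvU : 0 ≤ γ * v * (1 - U y) := by have := sub_nonneg.2 hU1; positivity
      exact mul_nonneg (exp_pos _).le (by linarith)
  obtain ⟨ξ, hξ, hU'ξ⟩ := exists_tendsto_atBot_deriv_comp_zero hU.differentiable hbot
  have hlim : Tendsto (g ∘ ξ) atBot (𝓝 (0 * (-0 - (γ - v) * (1 - 1)))) :=
    (tendsto_exp_atBot.comp ((tendsto_id.const_mul_atBot hγ).comp hξ)).mul
      (hU'ξ.neg.sub (((hbot.comp hξ).const_sub 1).const_mul (γ - v)))
  rw [zero_mul] at hlim
  have hg0 : 0 ≤ g 0 := le_of_tendsto hlim <| by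
    filter_upwards [hξ.eventually_le_atBot 0] with t ht
    exact hmono ht self_mem_Iic ht
  have hg0_eq : g 0 = v - γ * (1 - uc) := by
    simp only [g, mul_zero, exp_zero, one_mul, hU.deriv_eq_neg_mul le_rfl, hU0]
    ring
  linarith

end IsPTW

lemma eventually_speed_ratio_bounds {f : ℝ → ℝ} (hf : IsKPP f) {vstar : ℝ → ℝ}
    (hvstar : ∀ uc ∈ Ioo (0:ℝ) 1, 0 ≤ vstar uc ∧ ∃ U : ℝ → ℝ, IsPTW f uc (vstar uc) U)
    {t : ℝ} (ht : t ∈ Ioo (0:ℝ) 1) :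
    ∀ᶠ uc in 𝓝[<] (1:ℝ), √(1 - t) ≤ vstar uc / ((1 - uc) * √|deriv f 1|) ∧
      vstar uc / ((1 - uc) * √|deriv f 1|) * uc ≤ √(1 + t) := by
  obtain ⟨hfC1, -, hf1, -, hdf1, -, -⟩ := hf
  have hderiv : HasDerivAt f (-|deriv f 1|) 1 := by
    rw [abs_of_neg hdf1, neg_neg]
    exact (hfC1.differentiable one_ne_zero 1).hasDerivAt
  set μ := |deriv f 1|
  have hμ : 0 < μ := abs_pos.2 hdf1.ne
  filter_upwards [eventually_forall_Icc_mul_one_sub_le hderiv hf1 (mul_pos hμ ht.1),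
    Ioo_mem_nhdsLT zero_lt_one] with uc hbounds huc
  obtain ⟨hv, U, hU⟩ := hvstar uc huc
  have hlow := hU.mul_le_speed hfC1.continuous hv huc.1 (γ := √μ * √(1 - t))
    (mul_pos (sqrt_pos.2 hμ) (sqrt_pos.2 (sub_pos.2 ht.2))) fun u hu => by
      rw [mul_pow, sq_sqrt hμ.le, sq_sqrt (sub_pos.2 ht.2).le]
      linarith [(hbounds u hu).1]
  have hupp := hU.speed_mul_le hfC1.continuous hv huc.2.le (G := √μ * √(1 + t)) (by positivity)
    fun u hu => by
      rw [mul_pow, sq_sqrt hμ.le, sq_sqrt (by linarith [ht.1])]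
      linarith [(hbounds u hu).2]
  have hden : 0 < (1 - uc) * √μ := mul_pos (sub_pos.2 huc.2) (sqrt_pos.2 hμ)
  constructor
  · rw [le_div_iff₀ hden]
    linarith
  · rw [div_mul_eq_mul_div, div_le_iff₀ hden]
    linarith

/-- As the cut-off tends to `1⁻`, the speed is asymptotic to `|f'(1)|^(1/2) (1 - u_c)`. -/
theorem vstar_asymp_one (f : ℝ → ℝ) (hf : IsKPP f) (vstar : ℝ → ℝ)
    (hvstar : ∀ uc ∈ Set.Ioo (0:ℝ) 1, 0 ≤ vstar uc ∧ ∃ U : ℝ → ℝ, IsPTW f uc (vstar uc) U) :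
    Tendsto (fun uc => vstar uc / ((1 - uc) * Real.sqrt |deriv f 1|))
      (𝓝[<] (1:ℝ)) (𝓝 1) := by
  have hlow : Tendsto (fun t : ℝ => √(1 - t)) (𝓝[>] 0) (𝓝 1) := by
    simpa using ((by fun_prop : Continuous fun t : ℝ => √(1 - t)).tendsto 0).mono_left
      nhdsWithin_le_nhds
  have hupp : Tendsto (fun t : ℝ => √(1 + t)) (𝓝[>] 0) (𝓝 1) := by
    simpa using ((by fun_prop : Continuous fun t : ℝ => √(1 + t)).tendsto 0).mono_left
      nhdsWithin_le_nhds
  refine tendsto_order.2 ⟨fun a ha => ?_, fun b hb => ?_⟩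
  · obtain ⟨t, hat, ht⟩ := ((hlow.eventually_const_lt ha).and (Ioo_mem_nhdsGT zero_lt_one)).exists
    filter_upwards [eventually_speed_ratio_bounds hf hvstar ht] with uc hratio
    exact hat.trans_le hratio.1
  · obtain ⟨t, htb, ht⟩ := ((hupp.eventually_lt_const hb).and (Ioo_mem_nhdsGT zero_lt_one)).exists
    have hbuc : Tendsto (fun uc : ℝ => b * uc) (𝓝[<] 1) (𝓝 b) := by
      simpa using ((continuous_const_mul b).tendsto 1).mono_left nhdsWithin_le_nhds
    filter_upwards [eventually_speed_ratio_bounds hf hvstar ht, hbuc.eventually_const_lt htb,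
      Ioo_mem_nhdsLT zero_lt_one] with uc hratio hbuc huc
    exact lt_of_mul_lt_mul_right (hratio.2.trans_lt hbuc) huc.1.le
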